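/- arXiv:math/0210287 — 6 statements merged into one kernel-verified Lean document; each statement's English description precedes it below -/
import Mathlib

section
/- Let $(\Omega,\Sigma,\lambda)$ be a probability space and let $v_1, v_2$ be real-valued integrable functions on $\Omega$ satisfying $1-\delta < \int_\Omega |v_1|\,d\lambda \le \int_\Omega (v_1^2+v_2^2)^{1/2}\,d\lambda \le 1$ for some $\delta > 0$. Then $\int_\Omega |v_2|\,d\lambda \le \sqrt{2\delta}$. -/
/-!
Write `r = √(v₁² + v₂²)`. Pointwise `v₂² = (r + |v₁|)(r - |v₁|)`, so by AM-GM
`2|v₂| ≤ (r + |v₁|)/c + c (r - |v₁|)` for every `c > 0`. The hypotheses give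
`∫ (r + |v₁|) ≤ 2` and `∫ (r - |v₁|) < δ`; integrating and taking `c = √(2δ)/δ` balances
the two terms at `√(2δ)` each.
-/

open MeasureTheory

lemma two_mul_abs_le_of_sq_eq_mul {y u w c : ℝ} (hu : 0 ≤ u) (hw : 0 ≤ w) (hc : 0 < c)
    (h : y ^ 2 = u * w) : 2 * |y| ≤ u / c + c * w := by
  have hsq : (2 * y) ^ 2 ≤ (u / c + c * w) ^ 2 := by
    have hcancel : u / c * c = u := div_mul_cancel₀ u hc.ne'
    nlinarith [sq_nonneg (u / c - c * w)]
  simpa [abs_mul] using abs_le_of_sq_le_sq hsq (by positivity)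

lemma abs_le_sqrt_sq_add_sq (x y : ℝ) : |x| ≤ √(x ^ 2 + y ^ 2) :=
  Real.abs_le_sqrt (le_add_of_nonneg_right (sq_nonneg y))

lemma two_mul_abs_le_sqrt_sq_add_sq (x y : ℝ) {c : ℝ} (hc : 0 < c) :
    2 * |y| ≤ (√(x ^ 2 + y ^ 2) + |x|) / c + c * (√(x ^ 2 + y ^ 2) - |x|) := by
  refine two_mul_abs_le_of_sq_eq_mul (by positivity)
    (sub_nonneg.2 (abs_le_sqrt_sq_add_sq x y)) hc ?_
  rw [← sq_sub_sq, Real.sq_sqrt (by positivity), sq_abs, add_sub_cancel_left]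

lemma sqrt_sq_add_sq_le_abs_add_abs (x y : ℝ) : √(x ^ 2 + y ^ 2) ≤ |x| + |y| :=
  (Real.sqrt_le_left (by positivity)).2 <| by
    nlinarith [sq_abs x, sq_abs y, mul_nonneg (abs_nonneg x) (abs_nonneg y)]

section Integral

variable {Ω : Type*} [MeasurableSpace Ω] {μ : Measure Ω} {v1 v2 : Ω → ℝ}

lemma integrable_sqrt_sq_add_sq (hv1 : Integrable v1 μ) (hv2 : Integrable v2 μ) :
    Integrable (fun t => √(v1 t ^ 2 + v2 t ^ 2)) μ := by
  refine (hv1.abs.add hv2.abs).mono ?_ (Filter.Eventually.of_forall fun t => ?_)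
  · exact Real.continuous_sqrt.comp_aestronglyMeasurable
      ((hv1.aestronglyMeasurable.pow 2).add (hv2.aestronglyMeasurable.pow 2))
  · simp only [Real.norm_eq_abs, Pi.add_apply, abs_of_nonneg (Real.sqrt_nonneg _),
      abs_of_nonneg (add_nonneg (abs_nonneg (v1 t)) (abs_nonneg (v2 t)))]
    exact sqrt_sq_add_sq_le_abs_add_abs (v1 t) (v2 t)

lemma two_mul_integral_abs_le (hv1 : Integrable v1 μ) (hv2 : Integrable v2 μ) {c : ℝ}
    (hc : 0 < c) :
    2 * ∫ t, |v2 t| ∂μ ≤ ((∫ t, √(v1 t ^ 2 + v2 t ^ 2) ∂μ) + ∫ t, |v1 t| ∂μ) / c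
      + c * ((∫ t, √(v1 t ^ 2 + v2 t ^ 2) ∂μ) - ∫ t, |v1 t| ∂μ) := by
  have hr := integrable_sqrt_sq_add_sq hv1 hv2
  rw [← integral_add hr hv1.abs, ← integral_sub hr hv1.abs, ← integral_div,
    ← integral_const_mul, ← integral_const_mul, ← integral_add]
  · exact integral_mono (hv2.abs.const_mul 2)
      (((hr.add hv1.abs).div_const c).add ((hr.sub hv1.abs).const_mul c))
      fun t => two_mul_abs_le_sqrt_sq_add_sq (v1 t) (v2 t) hc
  · exact (hr.add hv1.abs).div_const c
  · exact (hr.sub hv1.abs).const_mul c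

end Integral

theorem stmt0 {Ω : Type*} [MeasurableSpace Ω] (μ : Measure Ω) [IsProbabilityMeasure μ]
    (v1 v2 : Ω → ℝ) (hv1 : Integrable v1 μ) (hv2 : Integrable v2 μ)
    (δ : ℝ) (hδ : 0 < δ)
    (h1 : 1 - δ < ∫ t, |v1 t| ∂μ)
    (h2 : ∫ t, |v1 t| ∂μ ≤ ∫ t, Real.sqrt ((v1 t) ^ 2 + (v2 t) ^ 2) ∂μ)
    (h3 : ∫ t, Real.sqrt ((v1 t) ^ 2 + (v2 t) ^ 2) ∂μ ≤ 1) :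
    ∫ t, |v2 t| ∂μ ≤ Real.sqrt (2 * δ) := by
  set s := √(2 * δ)
  have hs : 0 < s := Real.sqrt_pos.2 (by positivity)
  have hss : s * s = 2 * δ := Real.mul_self_sqrt (by positivity)
  have hc : 0 < s / δ := by positivity
  have hbound := two_mul_integral_abs_le hv1 hv2 hc
  have hsum : (∫ t, √(v1 t ^ 2 + v2 t ^ 2) ∂μ) + ∫ t, |v1 t| ∂μ ≤ 2 := by linarith
  have hdiff : (∫ t, √(v1 t ^ 2 + v2 t ^ 2) ∂μ) - ∫ t, |v1 t| ∂μ ≤ δ := by linarith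
  have hfirst : ((∫ t, √(v1 t ^ 2 + v2 t ^ 2) ∂μ) + ∫ t, |v1 t| ∂μ) / (s / δ) ≤ s := by
    rw [div_le_iff₀ hc]
    calc _ ≤ (2 : ℝ) := hsum
      _ = s * (s / δ) := by field_simp; linarith
  have hsecond : s / δ * ((∫ t, √(v1 t ^ 2 + v2 t ^ 2) ∂μ) - ∫ t, |v1 t| ∂μ) ≤ s := by
    calc _ ≤ s / δ * δ := mul_le_mul_of_nonneg_left hdiff hc.le
      _ = s := div_mul_cancel₀ s hδ.ne'
  linarith
end

section
/- Let $(\Omega,\Sigma,\lambda)$ be a probability space, $A \in \Sigma$, $\eta \in (0,1)$, and let $f \in L_1(\lambda)$ be a complex-valued function such that $\int_A \mathrm{Re}\, f \, d\lambda = 0$, $\|f\|_1 \le 2\lambda(A)$, and the set $B = \{t : |f(t) - \chi_A(t)| \ge \eta\}$ has measure $\lambda(B) \le \eta$. Then $\int_A |\mathrm{Re}\, f|\,d\lambda \ge 2(\lambda(A) - \eta)(1-\eta)$. -/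
/-!
Since `∫_A Re f = 0`, the integral of `|Re f|` over `A` is twice that of `(Re f)⁺`.
Off the set `B` of measure at most `η`, a point of `A` has `|f - 1| < η`, hence `Re f > 1 - η`;
so `∫_A (Re f)⁺ ≥ (1 - η) λ(A \ B) ≥ (1 - η)(λ(A) - η)`.
-/

open MeasureTheory

lemma Complex.one_sub_lt_re_of_norm_sub_one_lt {z : ℂ} {η : ℝ} (h : ‖z - 1‖ < η) :
    1 - η < z.re := by
  have hre : |z.re - 1| ≤ ‖z - 1‖ := by
    simpa using Complex.abs_re_le_norm (z - 1)
  linarith [(abs_lt.mp (hre.trans_lt h)).1]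

lemma mul_measureReal_le_setIntegral_posPart {X : Type*} [MeasurableSpace X] {μ : Measure X}
    {g : X → ℝ} {s t : Set X} {c : ℝ} (hg : IntegrableOn g s μ) (ht : NullMeasurableSet t μ)
    (hts : t ⊆ s) (ht_fin : μ t ≠ ⊤) (hc : ∀ x ∈ t, c ≤ g x) :
    c * μ.real t ≤ ∫ x in s, (g x)⁺ ∂μ := by
  have hgt : IntegrableOn g t μ := hg.mono_set hts
  calc c * μ.real t = ∫ _ in t, c ∂μ := by rw [setIntegral_const, smul_eq_mul, mul_comm]
    _ ≤ ∫ x in t, g x ∂μ := setIntegral_mono_on₀ (integrableOn_const ht_fin) hgt ht hc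
    _ ≤ ∫ x in t, (g x)⁺ ∂μ := setIntegral_mono hgt hgt.pos_part fun x ↦ le_posPart (g x)
    _ ≤ ∫ x in s, (g x)⁺ ∂μ :=
      setIntegral_mono_set hg.pos_part (.of_forall fun x ↦ posPart_nonneg (g x))
        (.of_forall hts)

theorem stmt1_general {Ω : Type*} [MeasurableSpace Ω] (μ : Measure Ω) [IsProbabilityMeasure μ]
    (A : Set Ω) (hA : MeasurableSet A) (η : ℝ) (hη1 : η < 1)
    (f : Ω → ℂ) (hf : Integrable f μ)
    (hRe : ∫ t in A, (f t).re ∂μ = 0)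
    (hB : (μ {t | η ≤ ‖f t - A.indicator (fun _ => (1 : ℂ)) t‖}).toReal ≤ η) :
    2 * ((μ A).toReal - η) * (1 - η) ≤ ∫ t in A, |(f t).re| ∂μ := by
  set B := {t | η ≤ ‖f t - A.indicator (fun _ => (1 : ℂ)) t‖}
  have hB_null : NullMeasurableSet B μ :=
    nullMeasurableSet_le aemeasurable_const
      (hf.1.sub (aestronglyMeasurable_const.indicator hA)).norm.aemeasurable
  have hre_int : IntegrableOn (fun t ↦ (f t).re) A μ := hf.re.integrableOn
  have hre_gt : ∀ t ∈ A \ B, 1 - η ≤ (f t).re := fun t ⟨htA, htB⟩ ↦ by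
    refine (Complex.one_sub_lt_re_of_norm_sub_one_lt ?_).le
    simpa [B, Set.indicator_of_mem htA] using htB
  have hAB : μ.real A - η ≤ μ.real (A \ B) := (sub_le_sub_left hB _).trans le_measureReal_sdiff
  calc 2 * ((μ A).toReal - η) * (1 - η) ≤ 2 * ((1 - η) * μ.real (A \ B)) := by
        rw [mul_assoc, mul_comm _ (1 - η)]
        gcongr
        exact hAB
    _ ≤ 2 * ∫ t in A, (f t).re⁺ ∂μ := by
        gcongr
        exact mul_measureReal_le_setIntegral_posPart hre_int
          (hA.nullMeasurableSet.diff hB_null) Set.sdiff_subset (measure_ne_top μ _) hre_gt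
    _ = ∫ t in A, |(f t).re| ∂μ := by
        rw [integral_abs_eq_two_mul_integral_posPart_sub_integral hre_int, hRe, sub_zero]

theorem stmt1 {Ω : Type*} [MeasurableSpace Ω] (μ : Measure Ω) [IsProbabilityMeasure μ]
    (A : Set Ω) (hA : MeasurableSet A) (η : ℝ) (hη0 : 0 < η) (hη1 : η < 1)
    (f : Ω → ℂ) (hf : Integrable f μ)
    (hRe : ∫ t in A, (f t).re ∂μ = 0)
    (hnorm : ∫ t, ‖f t‖ ∂μ ≤ 2 * (μ A).toReal)
    (hB : (μ {t | η ≤ ‖f t - A.indicator (fun _ => (1 : ℂ)) t‖}).toReal ≤ η) :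
    2 * ((μ A).toReal - η) * (1 - η) ≤ ∫ t in A, |(f t).re| ∂μ :=
  stmt1_general μ A hA η hη1 f hf hRe hB
end

section
/- Let $(\Omega,\Sigma,\lambda)$ be a probability space, $A \in \Sigma$, $\eta \in (0,1)$, and let $f \in L_1(\lambda)$ be a complex-valued function such that $\int_A \mathrm{Re}\, f \, d\lambda = 0$, $\|f\|_1 \le 2\lambda(A)$, and the set $B = \{t : |f(t) - \chi_A(t)| \ge \eta\}$ has measure $\lambda(B) \le \eta$. Then $\int_{\Omega \setminus A} |f|\,d\lambda \le 2\eta + 2\eta\,\lambda(A)$. -/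
/-! On `A \ B` the function `f` is within `η` of `1`, so `‖f‖ + Re f ≥ 2(1 - η)` there, while
`‖f‖ + Re f ≥ 0` everywhere. Since `∫_A Re f = 0`, Markov's inequality for `‖f‖ + Re f` on `A` gives
`∫_A ‖f‖ ≥ 2(1 - η) λ(A \ B) ≥ 2(1 - η)(λ(A) - η)`, and the bound on `∫_{Aᶜ} ‖f‖` follows from
`‖f‖₁ ≤ 2λ(A)`. -/

open MeasureTheory

namespace Complex

theorem norm_add_re_nonneg (z : ℂ) : 0 ≤ ‖z‖ + z.re := by
  linarith [neg_abs_le z.re, abs_re_le_norm z]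

theorem two_mul_one_sub_le_norm_add_re {z : ℂ} {η : ℝ} (h : ‖z - 1‖ < η) :
    2 * (1 - η) ≤ ‖z‖ + z.re := by
  have hre : 1 - η ≤ z.re := by
    have := re_le_norm (1 - z)
    rw [norm_sub_rev] at h
    simp only [sub_re, one_re] at this
    linarith
  linarith [re_le_norm z]

end Complex

theorem two_mul_one_sub_mul_measureReal_sdiff_le_setIntegral_norm {Ω : Type*}
    [MeasurableSpace Ω] {μ : Measure Ω} [IsFiniteMeasure μ] {A : Set Ω} {f : Ω → ℂ}
    (hf : IntegrableOn f A μ) (hRe : ∫ t in A, (f t).re ∂μ = 0) {η : ℝ} (hη : η ≤ 1) :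
    2 * (1 - η) * μ.real (A \ {t | η ≤ ‖f t - A.indicator (fun _ => (1 : ℂ)) t‖}) ≤
      ∫ t in A, ‖f t‖ ∂μ := by
  have hsub : A \ {t | η ≤ ‖f t - A.indicator (fun _ => (1 : ℂ)) t‖} ⊆
      {t | 2 * (1 - η) ≤ ‖f t‖ + (f t).re} ∩ A := by
    rintro t ⟨htA, htB⟩
    refine ⟨Complex.two_mul_one_sub_le_norm_add_re ?_, htA⟩
    simpa [Set.indicator_of_mem htA] using htB
  have hre : IntegrableOn (fun t => (f t).re) A μ := hf.re
  calc 2 * (1 - η) * μ.real (A \ {t | η ≤ ‖f t - A.indicator (fun _ => (1 : ℂ)) t‖})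
      ≤ 2 * (1 - η) * (μ.restrict A).real {t | 2 * (1 - η) ≤ ‖f t‖ + (f t).re} := by
        gcongr
        exact (measureReal_mono hsub).trans
          (ENNReal.toReal_mono (measure_ne_top _ _) (Measure.le_restrict_apply _ _))
    _ ≤ ∫ t in A, (‖f t‖ + (f t).re) ∂μ :=
        mul_meas_ge_le_integral_of_nonneg (ae_of_all _ fun t => Complex.norm_add_re_nonneg _)
          (hf.norm.add hre) _
    _ = ∫ t in A, ‖f t‖ ∂μ := by rw [integral_add hf.norm hre, hRe, add_zero]

theorem stmt2_general {Ω : Type*} [MeasurableSpace Ω] (μ : Measure Ω) [IsProbabilityMeasure μ]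
    (A : Set Ω) (hA : MeasurableSet A) (η : ℝ) (hη1 : η < 1)
    (f : Ω → ℂ) (hf : Integrable f μ)
    (hRe : ∫ t in A, (f t).re ∂μ = 0)
    (hnorm : ∫ t, ‖f t‖ ∂μ ≤ 2 * (μ A).toReal)
    (hB : (μ {t | η ≤ ‖f t - A.indicator (fun _ => (1 : ℂ)) t‖}).toReal ≤ η) :
    ∫ t in Aᶜ, ‖f t‖ ∂μ ≤ 2 * η + 2 * η * (μ A).toReal := by
  rw [← measureReal_def] at hnorm hB ⊢
  have hA_le := two_mul_one_sub_mul_measureReal_sdiff_le_setIntegral_norm hf.integrableOn hRe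
    hη1.le
  have hsdiff := le_measureReal_sdiff (μ := μ) (s₁ := A)
    (s₂ := {t | η ≤ ‖f t - A.indicator (fun _ => (1 : ℂ)) t‖})
  have hsplit := integral_add_compl hA hf.norm
  nlinarith [mul_le_mul_of_nonneg_left hsdiff (sub_nonneg.mpr hη1.le),
    mul_nonneg (sub_nonneg.mpr hη1.le) (sub_nonneg.mpr hB), sq_nonneg η]

theorem stmt2 {Ω : Type*} [MeasurableSpace Ω] (μ : Measure Ω) [IsProbabilityMeasure μ]
    (A : Set Ω) (hA : MeasurableSet A) (η : ℝ) (hη0 : 0 < η) (hη1 : η < 1)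
    (f : Ω → ℂ) (hf : Integrable f μ)
    (hRe : ∫ t in A, (f t).re ∂μ = 0)
    (hnorm : ∫ t, ‖f t‖ ∂μ ≤ 2 * (μ A).toReal)
    (hB : (μ {t | η ≤ ‖f t - A.indicator (fun _ => (1 : ℂ)) t‖}).toReal ≤ η) :
    ∫ t in Aᶜ, ‖f t‖ ∂μ ≤ 2 * η + 2 * η * (μ A).toReal :=
  stmt2_general μ A hA η hη1 f hf hRe hnorm hB
end

section
/- Let $(\Omega,\Sigma,\lambda)$ be a probability space, let $h \in L_\infty(\lambda)$ with $\|h\|_\infty = 1$, let $A \in \Sigma$ with $\lambda(A) > 0$, let $\varepsilon \in (0,1)$, and suppose $f \in L_1(\lambda)$ satisfies $\int_\Omega f h\, d\lambda = 0$ and there is a measurable set $A_n \subset A$ with $\lambda(A_n) \ge (1-\varepsilon)\lambda(A)$ and $|f(t)h(t) - 1| < \varepsilon$ for all $t \in A_n$. Then $\|f\|_1 \ge 2(1-\varepsilon)^2 \lambda(A)$. -/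
/-!
Write `g = f h`. Since `‖h‖ ≤ 1` a.e., `‖g‖ ≤ ‖f‖` a.e. On `Aₙ` we have `Re g ≥ 1 - ε`, so
`∫_{Aₙ} Re g ≥ (1 - ε) λ(Aₙ)`. As `∫ g = 0`, the integral of `g` over `Aₙ` is minus its integral
over the complement, hence `∫_{Aₙ} Re g ≤ ∫_{Aₙᶜ} ‖g‖`; together with `∫_{Aₙ} Re g ≤ ∫_{Aₙ} ‖g‖`
this gives `‖f‖₁ ≥ ‖g‖₁ ≥ 2 (1 - ε) λ(Aₙ) ≥ 2 (1 - ε)² λ(A)`.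
-/

open MeasureTheory

namespace MeasureTheory

variable {Ω : Type*} [MeasurableSpace Ω] {μ : Measure Ω}

lemma ae_norm_le_of_eLpNorm_top_le {h : Ω → ℂ} {C : NNReal} (hh : eLpNorm h ⊤ μ ≤ C) :
    ∀ᵐ t ∂μ, ‖h t‖ ≤ C := by
  filter_upwards [enorm_ae_le_eLpNormEssSup h μ] with t ht
  rw [← eLpNorm_exponent_top] at ht
  exact_mod_cast (ht.trans hh : ‖h t‖ₑ ≤ C)

lemma setIntegral_re_le_integral_compl_norm_of_integral_eq_zero {g : Ω → ℂ} {s : Set Ω}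
    (hs : MeasurableSet s) (hg : Integrable g μ) (hg0 : ∫ t, g t ∂μ = 0) :
    ∫ t in s, (g t).re ∂μ ≤ ∫ t in sᶜ, ‖g t‖ ∂μ := by
  have hneg : ∫ t in s, g t ∂μ = -∫ t in sᶜ, g t ∂μ := by
    rw [eq_neg_iff_add_eq_zero, integral_add_compl hs hg, hg0]
  calc ∫ t in s, (g t).re ∂μ = (∫ t in s, g t ∂μ).re := integral_re hg.integrableOn
    _ ≤ ‖∫ t in s, g t ∂μ‖ := Complex.re_le_norm _
    _ = ‖∫ t in sᶜ, g t ∂μ‖ := by rw [hneg, norm_neg]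
    _ ≤ ∫ t in sᶜ, ‖g t‖ ∂μ := norm_integral_le_integral_norm _

lemma two_mul_measureReal_le_integral_norm_of_integral_eq_zero {g : Ω → ℂ} {s : Set Ω} {c : ℝ}
    (hs : MeasurableSet s) (hg : Integrable g μ) (hg0 : ∫ t, g t ∂μ = 0)
    (hc : ∀ t ∈ s, c ≤ (g t).re) :
    2 * c * μ.real s ≤ ∫ t, ‖g t‖ ∂μ := by
  by_cases hμs : μ s = ⊤
  · simpa [measureReal_def, hμs] using integral_nonneg fun t => norm_nonneg (g t)
  have hlower : c * μ.real s ≤ ∫ t in s, (g t).re ∂μ :=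
    setIntegral_ge_of_const_le_real hs hμs hc hg.re.integrableOn
  have hnorm : ∫ t in s, (g t).re ∂μ ≤ ∫ t in s, ‖g t‖ ∂μ :=
    setIntegral_mono hg.re.integrableOn hg.norm.integrableOn fun t => Complex.re_le_norm (g t)
  have hcompl := setIntegral_re_le_integral_compl_norm_of_integral_eq_zero hs hg hg0
  rw [← integral_add_compl hs hg.norm]
  linarith

end MeasureTheory

theorem stmt3_general {Ω : Type*} [MeasurableSpace Ω] (μ : Measure Ω)
    (h : Ω → ℂ) (hh : eLpNorm h ⊤ μ = 1)
    (A : Set Ω)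
    (ε : ℝ) (hε1 : ε < 1)
    (f : Ω → ℂ) (hf : Integrable f μ) (hfh : Integrable (fun t => f t * h t) μ)
    (hint : ∫ t, f t * h t ∂μ = 0)
    (An : Set Ω) (hAn : MeasurableSet An)
    (hAnmeas : (1 - ε) * (μ A).toReal ≤ (μ An).toReal)
    (hclose : ∀ t ∈ An, ‖f t * h t - 1‖ < ε) :
    2 * (1 - ε) ^ 2 * (μ A).toReal ≤ ∫ t, ‖f t‖ ∂μ := by
  have hre : ∀ t ∈ An, 1 - ε ≤ (f t * h t).re := fun t ht => by
    have := Complex.re_le_norm (1 - f t * h t)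
    rw [norm_sub_rev] at this
    simp only [Complex.sub_re, Complex.one_re] at this
    linarith [hclose t ht]
  have hgf : ∫ t, ‖f t * h t‖ ∂μ ≤ ∫ t, ‖f t‖ ∂μ := by
    refine integral_mono_ae hfh.norm hf.norm ?_
    filter_upwards [ae_norm_le_of_eLpNorm_top_le hh.le] with t ht
    simpa [norm_mul] using mul_le_of_le_one_right (norm_nonneg (f t)) ht
  calc 2 * (1 - ε) ^ 2 * (μ A).toReal = 2 * (1 - ε) * ((1 - ε) * (μ A).toReal) := by ring
    _ ≤ 2 * (1 - ε) * (μ An).toReal := by gcongr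
    _ ≤ ∫ t, ‖f t * h t‖ ∂μ :=
      two_mul_measureReal_le_integral_norm_of_integral_eq_zero hAn hfh hint hre
    _ ≤ ∫ t, ‖f t‖ ∂μ := hgf

theorem stmt3 {Ω : Type*} [MeasurableSpace Ω] (μ : Measure Ω) [IsProbabilityMeasure μ]
    (h : Ω → ℂ) (hh : eLpNorm h ⊤ μ = 1)
    (A : Set Ω) (hA : MeasurableSet A) (hApos : 0 < μ A)
    (ε : ℝ) (hε0 : 0 < ε) (hε1 : ε < 1)
    (f : Ω → ℂ) (hf : Integrable f μ) (hfh : Integrable (fun t => f t * h t) μ)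
    (hint : ∫ t, f t * h t ∂μ = 0)
    (An : Set Ω) (hAn : MeasurableSet An) (hAnA : An ⊆ A)
    (hAnmeas : (1 - ε) * (μ A).toReal ≤ (μ An).toReal)
    (hclose : ∀ t ∈ An, ‖f t * h t - 1‖ < ε) :
    2 * (1 - ε) ^ 2 * (μ A).toReal ≤ ∫ t, ‖f t‖ ∂μ :=
  stmt3_general μ h hh A ε hε1 f hf hfh hint An hAn hAnmeas hclose
end

section
/- Let $K$ be a compact Hausdorff space, $E$ a Banach space, and $X$ a $C(K,E)$-superspace. If $K$ has no isolated points, then for all $f, g \in X$ with $\|f\| = \|g\| = 1$ and every $\varepsilon > 0$, the zero function lies in the closed convex hull of the set $D(f,g,\varepsilon) \cap C(K,E)$, where $D(f,g,\varepsilon) = \{h \in X : \|f+g+h\| > 2-\varepsilon \text{ and } \|g+h\| < 1+\varepsilon\}$. -/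
open scoped ENNReal

/-- `X` is a `C(K,E)`-superspace: a subspace of the bounded `E`-valued functions on `K`
(with sup norm) containing all continuous functions, such that every element of `X` is
large and almost constant on suitable open sets. -/
def IsCKESuperspace {K : Type*} [TopologicalSpace K] {E : Type*} [NormedAddCommGroup E]
    [NormedSpace ℝ E] (X : Submodule ℝ (lp (fun _ : K => E) ∞)) : Prop :=
  (∀ f : lp (fun _ : K => E) ∞, Continuous (fun t => f t) → f ∈ X) ∧
  (∀ f ∈ X, ∀ ε > (0 : ℝ), ∀ U : Set K, IsOpen U → U.Nonempty →
    ∃ e : E, (1 - ε) * (⨆ t ∈ U, ‖f t‖) < ‖e‖ ∧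
      ∃ V : Set K, IsOpen V ∧ V.Nonempty ∧ V ⊆ U ∧ ∀ τ ∈ V, ‖e - f τ‖ < ε)

/-!
Choose an open set where `f` is close to a vector `a` of norm almost `1`, and inside it a nonempty
open `V` where `g` is close to a vector `b`; put `e = a / ‖a‖ - b`. For every continuous
`φ : K → [0, 1]` supported in `V` and attaining `1`, the function `φ e` lies in `D(f, g, ε)`: at a
peak of `φ`, `f + g + φ e ≈ a + a / ‖a‖` has norm `≈ 2`, while pointwise `g + φ e` is the convex
combination `(1 - φ) g + φ (a / ‖a‖ + (g - b))` of two vectors of norm `≲ 1`. Since `K` has no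
isolated points, `V` contains infinitely many pairwise disjoint nonempty open sets, hence such bumps
`φ₁, φ₂, …` with disjoint supports; the averages `(φ₁ e + ⋯ + φₙ e) / n` lie in the convex hull and
have norm at most `‖e‖ / n`.
-/

open Set Filter Topology Function

section NormedSpace

variable {E : Type*} [NormedAddCommGroup E] [NormedSpace ℝ E]

theorem norm_add_inv_norm_smul_self {a : E} (ha : a ≠ 0) : ‖a + ‖a‖⁻¹ • a‖ = ‖a‖ + 1 := by
  rw [(SameRay.sameRay_nonneg_smul_right a (inv_nonneg.2 (norm_nonneg a))).norm_add, norm_smul,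
    norm_inv, norm_norm, inv_mul_cancel₀ (norm_ne_zero_iff.2 ha)]

theorem two_sub_lt_norm_add_add_inv_norm_smul_sub {a b x y : E} {η : ℝ} (ha : 1 - η < ‖a‖)
    (hx : ‖a - x‖ < η) (hy : ‖b - y‖ < η) :
    2 - 3 * η < ‖x + y + (‖a‖⁻¹ • a - b)‖ := by
  rcases eq_or_ne a 0 with rfl | ha0
  · -- then `η > 1`, so the left-hand side is negative
    simp only [norm_zero] at ha
    linarith [norm_nonneg (x + y + (‖(0 : E)‖⁻¹ • (0 : E) - b))]
  have hsplit : a + ‖a‖⁻¹ • a = (x + y + (‖a‖⁻¹ • a - b)) + (a - x) + (b - y) := by abel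
  have := norm_add₃_le (a := x + y + (‖a‖⁻¹ • a - b)) (b := a - x) (c := b - y)
  rw [← hsplit, norm_add_inv_norm_smul_self ha0] at this
  linarith

theorem norm_add_smul_sub_le_one_add {u b y : E} {s η : ℝ} (hs : s ∈ Icc (0 : ℝ) 1)
    (hu : ‖u‖ ≤ 1) (hy : ‖y‖ ≤ 1) (hyb : ‖y - b‖ ≤ η) : ‖y + s • (u - b)‖ ≤ 1 + η := by
  have hsplit : y + s • (u - b) = (1 - s) • y + s • (u + (y - b)) := by module
  have hη : 0 ≤ η := (norm_nonneg _).trans hyb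
  calc ‖y + s • (u - b)‖ ≤ ‖(1 - s) • y‖ + ‖s • (u + (y - b))‖ := hsplit ▸ norm_add_le _ _
    _ ≤ (1 - s) * 1 + s * (1 + η) := by
      rw [norm_smul, norm_smul, Real.norm_of_nonneg hs.1, Real.norm_of_nonneg (sub_nonneg.2 hs.2)]
      gcongr
      · linarith [hs.2]
      · exact hs.1
      · exact (norm_add_le _ _).trans (add_le_add hu hyb)
    _ ≤ 1 + η := by nlinarith [hs.1, hs.2]

end NormedSpace

theorem norm_sum_apply_le_of_pairwise_disjoint_support {ι α M : Type*} [SeminormedAddCommGroup M]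
    {φ : ι → α → M} {C : ℝ} (hC : 0 ≤ C) (hφ : ∀ i a, ‖φ i a‖ ≤ C)
    (hd : Pairwise (Disjoint on fun i => support (φ i))) (s : Finset ι) (a : α) :
    ‖∑ i ∈ s, φ i a‖ ≤ C := by
  by_cases h : ∃ i ∈ s, φ i a ≠ 0
  · obtain ⟨i, hi, hia⟩ := h
    rw [Finset.sum_eq_single_of_mem i hi fun j _ hji => ?_]
    · exact hφ i a
    · by_contra hja
      exact Set.disjoint_left.1 (hd hji) hja hia
  · push Not at h
    rw [Finset.sum_eq_zero h, norm_zero]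
    exact hC

section Topology

variable {K : Type*} [TopologicalSpace K]

theorem IsOpen.exists_seq_pairwise_disjoint_nonempty_isOpen_subset [T2Space K]
    (hperfect : ∀ x : K, ¬IsOpen ({x} : Set K)) {V : Set K} (hV : IsOpen V) (hVne : V.Nonempty) :
    ∃ W : ℕ → Set K, (∀ n, IsOpen (W n)) ∧ (∀ n, (W n).Nonempty) ∧ (∀ n, W n ⊆ V) ∧
      Pairwise (Disjoint on W) := by
  obtain ⟨x, hx⟩ := hVne
  have : (𝓝[≠] x).NeBot := ⟨fun h => hperfect x ((isOpen_singleton_iff_punctured_nhds x).2 h)⟩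
  have : Infinite V := (infinite_of_mem_nhds x (hV.mem_nhds hx)).to_subtype
  obtain ⟨U, hUinf, hUo, hUd⟩ := exists_seq_infinite_isOpen_pairwise_disjoint V
  refine ⟨fun n => (↑) '' U n, fun n => hV.isOpenMap_subtype_val _ (hUo n),
    fun n => (hUinf n).nonempty.image _, fun n => Subtype.coe_image_subset _ _, fun m n hmn => ?_⟩
  exact (Set.disjoint_image_iff Subtype.val_injective).2 (hUd hmn)

structure IsBumpIn (V : Set K) (φ : C(K, ℝ)) : Prop where
  mem_Icc : ∀ t, φ t ∈ Icc (0 : ℝ) 1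
  support_subset : support φ ⊆ V
  exists_eq_one : ∃ t, φ t = 1

theorem IsOpen.exists_isBumpIn [NormalSpace K] [T1Space K] {U : Set K} (hU : IsOpen U)
    (hUne : U.Nonempty) : ∃ φ : C(K, ℝ), IsBumpIn U φ := by
  obtain ⟨x, hx⟩ := hUne
  obtain ⟨φ, hφ0, hφ1, hφI⟩ := exists_continuous_zero_one_of_isClosed hU.isClosed_compl
    isClosed_singleton (Set.disjoint_singleton_right.2 (not_not.2 hx))
  refine ⟨φ, ⟨hφI, fun t ht => ?_, x, hφ1 rfl⟩⟩
  by_contra htU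
  exact ht (hφ0 htU)

theorem IsOpen.exists_seq_isBumpIn_pairwise_disjoint_support [T2Space K] [NormalSpace K]
    (hperfect : ∀ x : K, ¬IsOpen ({x} : Set K)) {V : Set K} (hV : IsOpen V) (hVne : V.Nonempty) :
    ∃ φ : ℕ → C(K, ℝ), (∀ n, IsBumpIn V (φ n)) ∧
      Pairwise (Disjoint on fun n => support (φ n)) := by
  obtain ⟨W, hWo, hWne, hWV, hWd⟩ :=
    hV.exists_seq_pairwise_disjoint_nonempty_isOpen_subset hperfect hVne
  choose φ hφ using fun n => (hWo n).exists_isBumpIn (hWne n)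
  exact ⟨φ, fun n => ⟨(hφ n).mem_Icc, (hφ n).support_subset.trans (hWV n), (hφ n).exists_eq_one⟩,
    fun m n hmn => (hWd hmn).mono (hφ m).support_subset (hφ n).support_subset⟩

end Topology

section LpInfty

variable {K : Type*} [TopologicalSpace K] [CompactSpace K] {E : Type*} [NormedAddCommGroup E]

namespace ContinuousMap

variable (𝕜 : Type*) [NormedField 𝕜] [NormedSpace 𝕜 E]

def toLpInfty : C(K, E) →ₗᵢ[𝕜] lp (fun _ : K => E) ∞ where
  toFun h := ⟨⇑h, memℓp_infty_iff.2 (isCompact_range h.continuous.norm).bddAbove⟩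
  map_add' _ _ := rfl
  map_smul' _ _ := rfl
  norm_map' h := by
    rw [lp.norm_eq_ciSup, norm_eq_iSup_norm]
    rfl

end ContinuousMap

variable [NormedSpace ℝ E] [T2Space K]

theorem zero_mem_closure_convexHull_of_forall_isBumpIn
    (hperfect : ∀ x : K, ¬IsOpen ({x} : Set K)) {V : Set K} (hV : IsOpen V) (hVne : V.Nonempty)
    (e : E) {S : Set (lp (fun _ : K => E) ∞)}
    (hS : ∀ φ, IsBumpIn V φ → ContinuousMap.toLpInfty ℝ (φ • ContinuousMap.const K e) ∈ S) :
    (0 : lp (fun _ : K => E) ∞) ∈ closure (convexHull ℝ S) := by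
  obtain ⟨φ, hφ, hφd⟩ := hV.exists_seq_isBumpIn_pairwise_disjoint_support hperfect hVne
  set p : ℕ → lp (fun _ : K => E) ∞ :=
    fun i => ContinuousMap.toLpInfty ℝ (φ i • ContinuousMap.const K e)
  have hsum_le (n : ℕ) : ‖∑ i ∈ Finset.range n, p i‖ ≤ ‖e‖ := by
    simp only [p, ← map_sum, ← Finset.sum_smul, LinearIsometry.norm_map]
    refine (ContinuousMap.norm_le _ (norm_nonneg e)).2 fun t => ?_
    rw [ContinuousMap.smul_apply', ContinuousMap.const_apply, norm_smul, ContinuousMap.sum_apply]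
    refine mul_le_of_le_one_left (norm_nonneg e) ?_
    refine norm_sum_apply_le_of_pairwise_disjoint_support (φ := fun i t => φ i t) zero_le_one
      (fun i t => ?_) hφd _ t
    rw [Real.norm_of_nonneg ((hφ i).mem_Icc t).1]
    exact ((hφ i).mem_Icc t).2
  refine mem_closure_of_tendsto (f := fun n : ℕ => ∑ i ∈ Finset.range n, (n : ℝ)⁻¹ • p i)
    (squeeze_zero_norm (a := fun n : ℕ => ‖e‖ / n) (fun n => ?_)
      (tendsto_const_div_atTop_nhds_zero_nat ‖e‖)) ?_
  · rw [← Finset.smul_sum, norm_smul, Real.norm_of_nonneg (by positivity), div_eq_inv_mul]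
    exact mul_le_mul_of_nonneg_left (hsum_le n) (by positivity)
  · filter_upwards [eventually_gt_atTop 0] with n hn
    refine (convex_convexHull ℝ S).sum_mem (fun i _ => by positivity) ?_
      fun i _ => subset_convexHull ℝ S (hS _ (hφ i))
    rw [Finset.sum_const, Finset.card_range, nsmul_eq_mul, mul_inv_cancel₀ (by positivity)]

end LpInfty

namespace IsCKESuperspace

variable {K : Type*} [TopologicalSpace K] {E : Type*} [NormedAddCommGroup E] [NormedSpace ℝ E]
  {X : Submodule ℝ (lp (fun _ : K => E) ∞)}

theorem exists_large_const_approx [Nonempty K] (hX : IsCKESuperspace X)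
    {f : lp (fun _ : K => E) ∞} (hf : f ∈ X) {η : ℝ} (hη : 0 < η) :
    ∃ a : E, (1 - η) * ‖f‖ < ‖a‖ ∧ ∃ V : Set K, IsOpen V ∧ V.Nonempty ∧ ∀ τ ∈ V, ‖a - f τ‖ < η := by
  obtain ⟨a, ha, V, hVo, hVne, -, hfV⟩ := hX.2 f hf η hη univ isOpen_univ univ_nonempty
  have hsup : (⨆ t ∈ univ, ‖f t‖) = ‖f‖ := by
    rw [lp.norm_eq_ciSup]
    exact iSup_congr fun t => ciSup_pos (mem_univ t)
  exact ⟨a, hsup ▸ ha, V, hVo, hVne, hfV⟩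

theorem exists_isOpen_forall_isBumpIn_mem [CompactSpace K] (hX : IsCKESuperspace X)
    {f g : lp (fun _ : K => E) ∞} (hf : f ∈ X) (hg : g ∈ X) (hf1 : ‖f‖ = 1) (hg1 : ‖g‖ = 1)
    {ε : ℝ} (hε : 0 < ε) :
    ∃ V : Set K, IsOpen V ∧ V.Nonempty ∧ ∃ e : E, ∀ φ, IsBumpIn V φ →
      ContinuousMap.toLpInfty ℝ (φ • ContinuousMap.const K e) ∈
        {h | h ∈ X ∧ 2 - ε < ‖f + g + h‖ ∧ ‖g + h‖ < 1 + ε} := by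
  have : Nonempty K := by
    by_contra hK
    rw [not_nonempty_iff] at hK
    simp [lp.norm_eq_ciSup] at hf1
  obtain ⟨a, ha, W, hWo, hWne, hfW⟩ := hX.exists_large_const_approx hf (η := ε / 3) (by positivity)
  obtain ⟨b, -, V, hVo, hVne, hVW, hgV⟩ := hX.2 g hg (ε / 3) (by positivity) W hWo hWne
  rw [hf1, mul_one] at ha
  have hg_le (t : K) : ‖g t‖ ≤ 1 := hg1 ▸ lp.norm_apply_le_norm ENNReal.top_ne_zero g t
  set e : E := ‖a‖⁻¹ • a - b
  refine ⟨V, hVo, hVne, e, fun φ hφ => ?_⟩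
  set h := ContinuousMap.toLpInfty ℝ (φ • ContinuousMap.const K e)
  have h_apply (t : K) : h t = φ t • e := rfl
  refine ⟨hX.1 h (ContinuousMap.continuous _), ?_, ?_⟩
  · obtain ⟨t, ht⟩ := hφ.exists_eq_one
    have htV : t ∈ V := hφ.support_subset (by simp [ht])
    calc 2 - ε = 2 - 3 * (ε / 3) := by ring
      _ < ‖f t + g t + e‖ :=
        two_sub_lt_norm_add_add_inv_norm_smul_sub ha (hfW t (hVW htV)) (hgV t htV)
      _ = ‖(f + g + h) t‖ := by rw [lp.coeFn_add, lp.coeFn_add, Pi.add_apply, Pi.add_apply,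
          h_apply, ht, one_smul]
      _ ≤ ‖f + g + h‖ := lp.norm_apply_le_norm ENNReal.top_ne_zero _ t
  · refine (lp.norm_le_of_forall_le (by positivity : (0 : ℝ) ≤ 1 + ε / 3) fun t => ?_).trans_lt
      (by linarith)
    rw [lp.coeFn_add, Pi.add_apply, h_apply]
    by_cases htV : t ∈ V
    · have hunit : ‖‖a‖⁻¹ • a‖ ≤ 1 := by
        rw [norm_smul, norm_inv, norm_norm]
        exact inv_mul_le_one_of_le₀ le_rfl (norm_nonneg a)
      have hgb : ‖g t - b‖ ≤ ε / 3 := by rw [norm_sub_rev]; exact (hgV t htV).le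
      exact norm_add_smul_sub_le_one_add (hφ.mem_Icc t) hunit (hg_le t) hgb
    · have hφt : φ t = 0 := by_contra fun hne => htV (hφ.support_subset hne)
      rw [hφt, zero_smul, add_zero]
      linarith [hg_le t]

end IsCKESuperspace

theorem stmt10_general {K : Type*} [TopologicalSpace K] [CompactSpace K] [T2Space K]
    {E : Type*} [NormedAddCommGroup E] [NormedSpace ℝ E]
    (X : Submodule ℝ (lp (fun _ : K => E) ∞)) (hX : IsCKESuperspace X)
    (hperfect : ∀ x : K, ¬ IsOpen ({x} : Set K))
    (f g : lp (fun _ : K => E) ∞) (hf : f ∈ X) (hg : g ∈ X)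
    (hf1 : ‖f‖ = 1) (hg1 : ‖g‖ = 1) (ε : ℝ) (hε : 0 < ε) :
    (0 : lp (fun _ : K => E) ∞) ∈ closure (convexHull ℝ
      ({h | h ∈ X ∧ 2 - ε < ‖f + g + h‖ ∧ ‖g + h‖ < 1 + ε} ∩
       {h | Continuous (fun t => h t)})) := by
  obtain ⟨V, hV, hVne, e, he⟩ := hX.exists_isOpen_forall_isBumpIn_mem hf hg hf1 hg1 hε
  exact zero_mem_closure_convexHull_of_forall_isBumpIn hperfect hV hVne e fun φ hφ =>
    ⟨he φ hφ, ContinuousMap.continuous _⟩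

theorem stmt10 {K : Type*} [TopologicalSpace K] [CompactSpace K] [T2Space K]
    {E : Type*} [NormedAddCommGroup E] [NormedSpace ℝ E] [CompleteSpace E]
    (X : Submodule ℝ (lp (fun _ : K => E) ∞)) (hX : IsCKESuperspace X)
    (hperfect : ∀ x : K, ¬ IsOpen ({x} : Set K))
    (f g : lp (fun _ : K => E) ∞) (hf : f ∈ X) (hg : g ∈ X)
    (hf1 : ‖f‖ = 1) (hg1 : ‖g‖ = 1) (ε : ℝ) (hε : 0 < ε) :
    (0 : lp (fun _ : K => E) ∞) ∈ closure (convexHull ℝ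
      ({h | h ∈ X ∧ 2 - ε < ‖f + g + h‖ ∧ ‖g + h‖ < 1 + ε} ∩
       {h | Continuous (fun t => h t)})) :=
  stmt10_general X hX hperfect f g hf hg hf1 hg1 ε hε
end

section
/- The complex space $L_1[0,1]$ is complex uniformly convex: there is a function $\delta(\varepsilon) \to 0$ as $\varepsilon \to 0$ such that if $g_1, g_2 \in L_1^{\mathbb{C}}[0,1]$ satisfy $\|g_1\|_1 > 1 - \varepsilon$ and $\|g_1 + \theta g_2\|_1 \le 1$ for all four values $\theta \in \{\tfrac12, -\tfrac12, \tfrac{i}{2}, -\tfrac{i}{2}\}$, then $\|g_2\|_1 < \delta(\varepsilon)$. -/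
set_option maxHeartbeats 1000000
open MeasureTheory Filter Complex

lemma tri1 (u v : ℂ) : 2 * ‖u‖ ≤ ‖u + v‖ + ‖u - v‖ := by
  have h := norm_add_le (u + v) (u - v)
  have e : u + v + (u - v) = (2 : ℂ) * u := by ring
  rw [e, norm_mul] at h
  simpa using h

lemma tri2 (u v : ℂ) : 2 * ‖v‖ ≤ ‖u + v‖ + ‖u - v‖ := by
  have h := norm_sub_le (u + v) (u - v)
  have e : u + v - (u - v) = (2 : ℂ) * v := by ring
  rw [e, norm_mul] at h
  simpa using h

lemma prodsq (u v : ℂ) : (‖u + v‖ + ‖u - v‖)^2 = 2*‖u‖^2 + 2*‖v‖^2 + 2*‖u^2 - v^2‖ := by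
  have hpar := parallelogram_law_with_norm ℝ u v
  have hmul : ‖u + v‖ * ‖u - v‖ = ‖u^2 - v^2‖ := by
    rw [← norm_mul]; ring_nf
  nlinarith [hpar, hmul]

lemma key (a b : ℂ) :
    4 * Real.sqrt (‖a‖^2 + ‖b‖^2/16) ≤
      ‖a + 1/2 * b‖ + ‖a + -(1/2) * b‖ + ‖a + Complex.I/2 * b‖ + ‖a + -(Complex.I/2) * b‖ := by
  set c : ℂ := b/2 with hc
  have e1 : a + 1/2 * b = a + c := by rw [hc]; ring
  have e2 : a + -(1/2) * b = a - c := by rw [hc]; ring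
  have e3 : a + Complex.I/2 * b = a + I * c := by rw [hc]; ring
  have e4 : a + -(Complex.I/2) * b = a - I * c := by rw [hc]; ring
  rw [e1, e2, e3, e4]
  have hbc : ‖b‖ = 2 * ‖c‖ := by
    rw [hc]; rw [norm_div]; simp; ring
  set x := ‖a‖ with hx
  set s := ‖c‖ with hs
  have hsI : ‖I * c‖ = s := by rw [norm_mul, Complex.norm_I, one_mul]
  have hp1 : 2 * x ≤ ‖a + c‖ + ‖a - c‖ := tri1 a c
  have hp2 : 2 * s ≤ ‖a + c‖ + ‖a - c‖ := tri2 a c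
  have hq1 : 2 * x ≤ ‖a + I*c‖ + ‖a - I*c‖ := tri1 a (I*c)
  have hq2 : 2 * s ≤ ‖a + I*c‖ + ‖a - I*c‖ := by
    have := tri2 a (I*c); rwa [hsI] at this
  have hP : (‖a + c‖ + ‖a - c‖)^2 = 2*x^2 + 2*s^2 + 2*‖a^2 - c^2‖ := prodsq a c
  have hQ : (‖a + I*c‖ + ‖a - I*c‖)^2 = 2*x^2 + 2*s^2 + 2*‖a^2 + c^2‖ := by
    have hh := prodsq a (I*c)
    rw [hsI] at hh
    have h2 : a^2 - (I*c)^2 = a^2 + c^2 := by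
      have hIc : (I*c)^2 = -(c^2) := by rw [mul_pow, I_sq]; ring
      rw [hIc]; ring
    rwa [h2] at hh
  have hPQ1 : 2 * x^2 ≤ ‖a^2 - c^2‖ + ‖a^2 + c^2‖ := by
    have h := norm_add_le (a^2 - c^2) (a^2 + c^2)
    have he : a^2 - c^2 + (a^2 + c^2) = (2:ℂ) * a^2 := by ring
    rw [he, norm_mul] at h
    have hxx : ‖a^2‖ = x^2 := by rw [norm_pow]
    have h2 : ‖(2:ℂ)‖ = 2 := by norm_num
    rw [hxx, h2] at h
    linarith [h]
  have hPQ2 : 2 * s^2 ≤ ‖a^2 - c^2‖ + ‖a^2 + c^2‖ := by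
    have h := norm_sub_le (a^2 + c^2) (a^2 - c^2)
    have he : a^2 + c^2 - (a^2 - c^2) = (2:ℂ) * c^2 := by ring
    rw [he, norm_mul] at h
    have hss : ‖c^2‖ = s^2 := by rw [norm_pow]
    have h2 : ‖(2:ℂ)‖ = 2 := by norm_num
    rw [hss, h2] at h
    linarith [h]
  have hx0 : 0 ≤ x := norm_nonneg a
  have hs0 : 0 ≤ s := norm_nonneg c
  have hp0 : 0 ≤ ‖a + c‖ + ‖a - c‖ := by positivity
  have hq0 : 0 ≤ ‖a + I*c‖ + ‖a - I*c‖ := by positivity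
  set p := ‖a + c‖ + ‖a - c‖
  set q := ‖a + I*c‖ + ‖a - I*c‖
  have hmain : 16*x^2 + 4*s^2 ≤ (p + q)^2 := by
    rcases le_total s x with hcase | hcase
    · nlinarith [mul_le_mul hp1 hq1 (by linarith) hp0, hPQ1]
    · nlinarith [mul_le_mul hp2 hq2 (by linarith) hp0, hPQ2]
  have harg : ‖a‖^2 + ‖b‖^2/16 = x^2 + s^2/4 := by rw [hbc, ← hx]; ring
  rw [harg]
  have h1 : 4 * Real.sqrt (x^2 + s^2/4) = Real.sqrt (16*x^2 + 4*s^2) := by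
    rw [show (16*x^2+4*s^2) = 4^2 * (x^2+s^2/4) by ring, Real.sqrt_mul (by norm_num)]
    rw [Real.sqrt_sq (by norm_num)]
  rw [h1]
  have hfin : Real.sqrt (16*x^2+4*s^2) ≤ p + q := by
    calc Real.sqrt (16*x^2+4*s^2) ≤ Real.sqrt ((p+q)^2) := Real.sqrt_le_sqrt hmain
      _ = p + q := Real.sqrt_sq (by linarith)
  show Real.sqrt (16*x^2+4*s^2) ≤ p + ‖a + I*c‖ + ‖a - I*c‖
  have hpq : p + ‖a + I*c‖ + ‖a - I*c‖ = p + q := by ring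
  linarith [hfin]

lemma amgm (s X Y : ℝ) (hs : 0 < s) (hX : 0 ≤ X) :
    Y ≤ (2/s) * (Real.sqrt (X^2 + Y^2/16) - X) + 2*s*(Real.sqrt (X^2 + Y^2/16) + X) := by
  set F := Real.sqrt (X^2 + Y^2/16) with hF
  have hF0 : 0 ≤ F := Real.sqrt_nonneg _
  have hFsq : F^2 = X^2 + Y^2/16 := Real.sq_sqrt (by positivity)
  have hFX : X ≤ F := by
    rw [hF]
    calc X = Real.sqrt (X^2) := (Real.sqrt_sq hX).symm
      _ ≤ _ := Real.sqrt_le_sqrt (by nlinarith)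
  have hY : 0 ≤ Y ∨ Y ≤ 0 := le_total 0 Y
  have hAB : (F - X) * (F + X) = Y^2/16 := by nlinarith [hFsq]
  have hA0 : 0 ≤ F - X := by linarith
  have hB0 : 0 ≤ F + X := by linarith
  have hT0 : 0 ≤ 2*(F - X) + 2*s^2*(F + X) := by positivity
  have hkey : s * Y ≤ 2*(F - X) + 2*s^2*(F + X) := by
    have hsqcmp : (s*Y)^2 ≤ (2*(F - X) + 2*s^2*(F + X))^2 := by
      nlinarith [sq_nonneg ((F - X) - s^2*(F + X)), hAB, sq_nonneg s]
    rcases le_total (s*Y) 0 with hsY | hsY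
    · linarith
    · nlinarith [hsqcmp, hsY, hT0]
  calc Y = (s * Y) / s := by field_simp
    _ ≤ (2*(F - X) + 2*s^2*(F + X)) / s := by gcongr
    _ = (2/s) * (F - X) + 2*s*(F + X) := by field_simp


lemma main_aux {α : Type*} [MeasurableSpace α] {μ : Measure α} (ε : ℝ) (hε : 0 < ε)
    (g1 g2 : Lp ℂ 1 μ) (hg1 : 1 - ε < ‖g1‖)
    (h : ∀ θ ∈ ({1 / 2, -(1 / 2), Complex.I / 2, -(Complex.I / 2)} : Set ℂ),
      ‖g1 + θ • g2‖ ≤ 1) :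
    ‖g2‖ < 6 * Real.sqrt ε := by
  have hg1i : Integrable (⇑g1) μ := L1.integrable_coeFn g1
  have hg2i : Integrable (⇑g2) μ := L1.integrable_coeFn g2
  have hXi : Integrable (fun a => ‖g1 a‖) μ := hg1i.norm
  have hYi : Integrable (fun a => ‖g2 a‖) μ := hg2i.norm
  set F : α → ℝ := fun a => Real.sqrt (‖g1 a‖^2 + ‖g2 a‖^2/16) with hFdef
  have hn1 : AEStronglyMeasurable (fun a => ‖g1 a‖) μ := hg1i.aestronglyMeasurable.norm
  have hn2 : AEStronglyMeasurable (fun a => ‖g2 a‖) μ := hg2i.aestronglyMeasurable.norm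
  have hinner : AEStronglyMeasurable (fun a => ‖g1 a‖^2 + ‖g2 a‖^2/16) μ := by
    have e : (fun a => ‖g1 a‖^2 + ‖g2 a‖^2/16) =
        fun a => ‖g1 a‖ * ‖g1 a‖ + (‖g2 a‖ * ‖g2 a‖) / 16 := by
      funext a; ring
    rw [e]
    exact (hn1.mul hn1).add (((hn2.mul hn2)).mul aestronglyMeasurable_const)
  have hFm : AEStronglyMeasurable F μ := by
    rw [hFdef]
    exact Real.continuous_sqrt.comp_aestronglyMeasurable hinner
  have hFint : Integrable F μ := by
    apply Integrable.mono' (hXi.add hYi) hFm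
    filter_upwards with a
    have h0 : (0:ℝ) ≤ F a := Real.sqrt_nonneg _
    rw [Real.norm_eq_abs, _root_.abs_of_nonneg h0]
    show F a ≤ ‖g1 a‖ + ‖g2 a‖
    calc F a ≤ Real.sqrt ((‖g1 a‖ + ‖g2 a‖)^2) := by
          apply Real.sqrt_le_sqrt
          nlinarith [norm_nonneg (g1 a), norm_nonneg (g2 a)]
      _ = ‖g1 a‖ + ‖g2 a‖ := Real.sqrt_sq (by positivity)
  have hnorm : ∀ θ : ℂ, ‖g1 + θ • g2‖ = ∫ a, ‖g1 a + θ * g2 a‖ ∂μ := by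
    intro θ
    rw [L1.norm_eq_integral_norm]
    apply integral_congr_ae
    filter_upwards [Lp.coeFn_add g1 (θ • g2), Lp.coeFn_smul θ g2] with a h1 h2
    simp only [Pi.add_apply, Pi.smul_apply, smul_eq_mul] at h1 h2
    rw [h1, h2]
  have hint : ∀ θ : ℂ, Integrable (fun a => ‖g1 a + θ * g2 a‖) μ :=
    fun θ => (hg1i.add (hg2i.const_mul θ)).norm
  have m1 : (1/2 : ℂ) ∈ ({1/2, -(1/2), Complex.I/2, -(Complex.I/2)} : Set ℂ) :=
    Set.mem_insert _ _
  have m2 : (-(1/2) : ℂ) ∈ ({1/2, -(1/2), Complex.I/2, -(Complex.I/2)} : Set ℂ) :=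
    Set.mem_insert_of_mem _ (Set.mem_insert _ _)
  have m3 : (Complex.I/2 : ℂ) ∈ ({1/2, -(1/2), Complex.I/2, -(Complex.I/2)} : Set ℂ) :=
    Set.mem_insert_of_mem _ (Set.mem_insert_of_mem _ (Set.mem_insert _ _))
  have m4 : (-(Complex.I/2) : ℂ) ∈ ({1/2, -(1/2), Complex.I/2, -(Complex.I/2)} : Set ℂ) :=
    Set.mem_insert_of_mem _ (Set.mem_insert_of_mem _ (Set.mem_insert_of_mem _ rfl))
  have i1 := hint (1/2 : ℂ)
  have i2 := hint (-(1/2) : ℂ)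
  have i3 := hint (Complex.I/2 : ℂ)
  have i4 := hint (-(Complex.I/2) : ℂ)
  have hI1 : ∫ a, ‖g1 a + 1/2 * g2 a‖ ∂μ ≤ 1 := by
    have hh := h _ m1; rwa [hnorm (1/2 : ℂ)] at hh
  have hI2 : ∫ a, ‖g1 a + -(1/2) * g2 a‖ ∂μ ≤ 1 := by
    have hh := h _ m2; rwa [hnorm (-(1/2) : ℂ)] at hh
  have hI3 : ∫ a, ‖g1 a + Complex.I/2 * g2 a‖ ∂μ ≤ 1 := by
    have hh := h _ m3; rwa [hnorm (Complex.I/2 : ℂ)] at hh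
  have hI4 : ∫ a, ‖g1 a + -(Complex.I/2) * g2 a‖ ∂μ ≤ 1 := by
    have hh := h _ m4; rwa [hnorm (-(Complex.I/2) : ℂ)] at hh
  -- ∫ F ≤ 1
  have hFle : ∫ a, F a ∂μ ≤ 1 := by
    have hmono : ∫ a, 4 * F a ∂μ ≤ ∫ a, (‖g1 a + 1/2 * g2 a‖ + ‖g1 a + -(1/2) * g2 a‖
        + ‖g1 a + Complex.I/2 * g2 a‖ + ‖g1 a + -(Complex.I/2) * g2 a‖) ∂μ := by
      apply integral_mono (hFint.const_mul 4) (((i1.add i2).add i3).add i4)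
      intro a
      exact key (g1 a) (g2 a)
    rw [integral_const_mul] at hmono
    have k12 : Integrable (fun a => ‖g1 a + 1/2 * g2 a‖ + ‖g1 a + -(1/2) * g2 a‖) μ := by
      exact i1.add i2
    have k123 : Integrable (fun a => ‖g1 a + 1/2 * g2 a‖ + ‖g1 a + -(1/2) * g2 a‖
        + ‖g1 a + Complex.I/2 * g2 a‖) μ := by exact k12.add i3
    rw [integral_add k123 i4, integral_add k12 i3, integral_add i1 i2] at hmono
    linarith
  -- ∫ ‖g1‖ facts
  have hXnorm : ‖g1‖ = ∫ a, ‖g1 a‖ ∂μ := L1.norm_eq_integral_norm g1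
  have hYnorm : ‖g2‖ = ∫ a, ‖g2 a‖ ∂μ := L1.norm_eq_integral_norm g2
  have hXgt : 1 - ε < ∫ a, ‖g1 a‖ ∂μ := by rw [← hXnorm]; exact hg1
  have hXle : ∫ a, ‖g1 a‖ ∂μ ≤ 1 := by
    rw [← hXnorm]
    have hrepr : (2:ℂ) • g1 = (g1 + (1/2 : ℂ) • g2) + (g1 + (-(1/2) : ℂ) • g2) := by
      module
    have h2 : 2 * ‖g1‖ = ‖(2:ℂ) • g1‖ := by
      rw [norm_smul]; norm_num
    have hb := norm_add_le (g1 + (1/2 : ℂ) • g2) (g1 + (-(1/2) : ℂ) • g2)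
    rw [← hrepr] at hb
    have ha := h _ m1
    have hb2 := h _ m2
    linarith [h2 ▸ hb]
  -- final bound
  set s := Real.sqrt ε with hsdef
  have hs : 0 < s := Real.sqrt_pos.2 hε
  have hs2 : s^2 = ε := Real.sq_sqrt hε.le
  have hpt : ∀ a, ‖g2 a‖ ≤ (2/s) * (F a - ‖g1 a‖) + 2*s*(F a + ‖g1 a‖) :=
    fun a => amgm s _ _ hs (norm_nonneg _)
  have hRHSint : Integrable (fun a => (2/s) * (F a - ‖g1 a‖) + 2*s*(F a + ‖g1 a‖)) μ :=
    ((hFint.sub hXi).const_mul (2/s)).add ((hFint.add hXi).const_mul (2*s))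
  have hYle : ∫ a, ‖g2 a‖ ∂μ ≤ (2/s) * ((∫ a, F a ∂μ) - ∫ a, ‖g1 a‖ ∂μ)
      + 2*s*((∫ a, F a ∂μ) + ∫ a, ‖g1 a‖ ∂μ) := by
    have j1 : Integrable (fun a => (2/s) * (F a - ‖g1 a‖)) μ := by
      exact (hFint.sub hXi).const_mul (2/s)
    have j2 : Integrable (fun a => 2*s*(F a + ‖g1 a‖)) μ := by
      exact (hFint.add hXi).const_mul (2*s)
    have := integral_mono hYi hRHSint hpt
    rwa [integral_add j1 j2, integral_const_mul, integral_const_mul,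
        integral_sub hFint hXi, integral_add hFint hXi] at this
  rw [hYnorm]
  have e1 : (∫ a, F a ∂μ) - (∫ a, ‖g1 a‖ ∂μ) < ε := by linarith
  have c1 : (2/s) * ((∫ a, F a ∂μ) - ∫ a, ‖g1 a‖ ∂μ) < (2/s) * ε :=
    mul_lt_mul_of_pos_left e1 (by positivity)
  have c2 : (2/s) * ε = 2 * s := by
    rw [← hs2]; field_simp
  have c3 : 2*s*((∫ a, F a ∂μ) + ∫ a, ‖g1 a‖ ∂μ) ≤ 2*s*2 :=
    mul_le_mul_of_nonneg_left (by linarith) (by positivity)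
  linarith

theorem stmt14 :
    ∃ δ : ℝ → ℝ, Tendsto δ (nhdsWithin 0 (Set.Ioi 0)) (nhds 0) ∧
      ∀ ε > (0 : ℝ), ∀ g1 g2 : Lp ℂ 1 (volume.restrict (Set.Icc (0 : ℝ) 1)),
        1 - ε < ‖g1‖ →
        (∀ θ ∈ ({1 / 2, -(1 / 2), Complex.I / 2, -(Complex.I / 2)} : Set ℂ),
          ‖g1 + θ • g2‖ ≤ 1) →
        ‖g2‖ < δ ε := by
  refine ⟨fun ε => 6 * Real.sqrt ε, ?_, ?_⟩
  · have hc : Tendsto (fun ε : ℝ => 6 * Real.sqrt ε) (nhds 0) (nhds (6 * Real.sqrt 0)) :=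
      ((continuous_const.mul Real.continuous_sqrt).tendsto 0)
    simpa using hc.mono_left nhdsWithin_le_nhds
  · intro ε hε g1 g2 hg1 h
    exact main_aux ε hε g1 g2 hg1 h
end
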